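/- Define γ_q(u) = α·β where α = 1+λ₊+⋯+λ₊^{q−1} and β = 1+λ₋+⋯+λ₋^{q−1}, with λ±(u) the roots of X² − (u²+2)X + 1. Then γ_q(u) is a polynomial with integer coefficients, is monic, and has degree 2|q|−2 for every nonzero integer q (for q < 0 interpret α, β via λ^{−1} appropriately, i.e. α = (λ₊^q − 1)/(λ₊ − 1)). -/

import Mathlib

open Polynomial

/-!
Writing `λ₊ + λ₋ = u² + 2` and `λ₊ λ₋ = 1`, the power sums `τₙ = λ₊ⁿ + λ₋ⁿ` satisfy
`τₙ₊₂ = (u² + 2) τₙ₊₁ - τₙ`, and `γ_q = (τ_{|q|} - 2) / u²` because `λ₋ = λ₊⁻¹`. Dividing the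
recursion by `u²` gives an integer recursion for `γₙ` whose leading term is `X² γₙ₊₁`, so
monicity and the degree `2n - 2` follow by induction.
-/

/-- `λ₊(u) = ((u²+2) + r)/2` where `r` is a square root of `u⁴+4u²`. -/
noncomputable def lamp (u r : ℂ) : ℂ := (u ^ 2 + 2 + r) / 2

/-- `λ₋(u) = ((u²+2) - r)/2` where `r` is a square root of `u⁴+4u²`. -/
noncomputable def lamm (u r : ℂ) : ℂ := (u ^ 2 + 2 - r) / 2

/-- `P` is the polynomial `γ_q`, characterized by
`(λ₊ - 1)(λ₋ - 1)·γ_q(u) = (λ₊^q - 1)(λ₋^q - 1)`. -/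
def GammaRel (q : ℤ) (P : Polynomial ℤ) : Prop :=
  ∀ u r : ℂ, r ^ 2 = u ^ 4 + 4 * u ^ 2 →
    (lamp u r - 1) * (lamm u r - 1) * (Polynomial.aeval u P : ℂ) =
      ((lamp u r) ^ q - 1) * ((lamm u r) ^ q - 1)

noncomputable def gammaPoly : ℕ → ℤ[X]
  | 0 => 0
  | 1 => 1
  | n + 2 => (X ^ 2 + 2) * gammaPoly (n + 1) - gammaPoly n + 2

lemma gammaPoly_add_two (n : ℕ) :
    gammaPoly (n + 2) = (X ^ 2 + 2) * gammaPoly (n + 1) - gammaPoly n + 2 := rfl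

lemma sq_mul_aeval_gammaPoly {R : Type*} [CommRing R] (n : ℕ) {u a b : R}
    (hab : a * b = 1) (hs : a + b = u ^ 2 + 2) :
    u ^ 2 * aeval u (gammaPoly n) = a ^ n + b ^ n - 2 := by
  induction n using Nat.twoStepInduction with
  | zero => norm_num [gammaPoly]
  | one =>
    simp only [gammaPoly, map_one, mul_one, pow_one]
    linear_combination -hs
  | more n ih₀ ih₁ =>
    simp only [gammaPoly_add_two, map_add, map_sub, map_mul, map_pow, aeval_X, map_ofNat]
    linear_combination (u ^ 2 + 2) * ih₁ - ih₀ + (a ^ n + b ^ n) * hab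
      - (a ^ (n + 1) + b ^ (n + 1)) * hs

lemma monic_gammaPoly_succ_and_natDegree (n : ℕ) :
    (gammaPoly (n + 1)).Monic ∧ (gammaPoly (n + 1)).natDegree = 2 * n := by
  induction n using Nat.twoStepInduction with
  | zero => simp [gammaPoly]
  | one =>
    rw [show gammaPoly 2 = X ^ 2 + 4 by rw [gammaPoly_add_two, gammaPoly, gammaPoly]; ring]
    exact ⟨by monicity!, by compute_degree!⟩
  | more n ih₀ ih₁ =>
    have hX : ((X : ℤ[X]) ^ 2 + 2).Monic ∧ ((X : ℤ[X]) ^ 2 + 2).natDegree = 2 :=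
      ⟨by monicity!, by compute_degree!⟩
    have hlead : ((X ^ 2 + 2) * gammaPoly (n + 2)).natDegree = 2 * (n + 2) := by
      rw [hX.1.natDegree_mul ih₁.1, hX.2, ih₁.2]; ring
    have hlow : (2 - gammaPoly (n + 1)).degree < ((X ^ 2 + 2) * gammaPoly (n + 2)).degree := by
      refine degree_lt_degree ((natDegree_sub_le _ _).trans_lt ?_)
      rw [hlead, ih₀.2, natDegree_ofNat]
      omega
    have hrec : gammaPoly (n + 3) = (X ^ 2 + 2) * gammaPoly (n + 2) + (2 - gammaPoly (n + 1)) := by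
      rw [gammaPoly_add_two (n + 1)]; ring
    rw [hrec, natDegree_add_eq_left_of_degree_lt hlow, hlead]
    exact ⟨(hX.1.mul ih₁.1).add_of_left hlow, rfl⟩

lemma zpow_add_zpow_eq_pow_natAbs {K : Type*} [Field K] {a b : K} (hab : a * b = 1) (q : ℤ) :
    a ^ q + b ^ q = a ^ q.natAbs + b ^ q.natAbs := by
  obtain rfl : b = a⁻¹ := eq_inv_of_mul_eq_one_right hab
  obtain ⟨n, rfl | rfl⟩ := Int.eq_nat_or_neg q <;> simp [add_comm]

lemma lamp_mul_lamm {u r : ℂ} (hr : r ^ 2 = u ^ 4 + 4 * u ^ 2) : lamp u r * lamm u r = 1 := by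
  unfold lamp lamm; linear_combination -hr / 4

lemma lamp_add_lamm (u r : ℂ) : lamp u r + lamm u r = u ^ 2 + 2 := by
  unfold lamp lamm; ring

lemma gammaRel_gammaPoly (q : ℤ) : GammaRel q (gammaPoly q.natAbs) := by
  intro u r hr
  have hab := lamp_mul_lamm hr
  have habq : lamp u r ^ q * lamm u r ^ q = 1 := by rw [← mul_zpow, hab, one_zpow]
  -- both sides expand to `-u² γ` and `2 - τ_{|q|}` respectively
  linear_combination aeval u (gammaPoly q.natAbs) * (hab - lamp_add_lamm u r) - habq
    + zpow_add_zpow_eq_pow_natAbs hab q - sq_mul_aeval_gammaPoly q.natAbs hab (lamp_add_lamm u r)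

/-- γ_q = (λ₊^q-1)(λ₋^q-1)/((λ₊-1)(λ₋-1)) is an integer polynomial,
monic of degree 2|q|-2, for every nonzero integer q. -/
theorem stmt_7 (q : ℤ) (hq : q ≠ 0) :
    ∃ P : Polynomial ℤ, GammaRel q P ∧ P.Monic ∧ P.natDegree = 2 * q.natAbs - 2 := by
  obtain ⟨n, hn⟩ : ∃ n, q.natAbs = n + 1 := Nat.exists_eq_succ_of_ne_zero (Int.natAbs_ne_zero.2 hq)
  obtain ⟨hmonic, hdeg⟩ := monic_gammaPoly_succ_and_natDegree n
  refine ⟨gammaPoly q.natAbs, gammaRel_gammaPoly q, hn ▸ hmonic, ?_⟩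
  rw [hn, hdeg]
  omega
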